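/- Let φ be a holomorphic self-map of the unit disk with φ(0)=0 and 0<|φ'(0)|<1, let u be holomorphic on D with u(0) ≠ 0, and suppose β > 0 with |u(z)|·(1−|z|²)^β ≤ |u(0)|·(1−|φ(z)|²)^β for all z ∈ D. Define v_k(z) = u(z)u(φ(z))···u(φ_{k−1}(z))/u(0)^k. Then (1−|z|²)^β |v_k(z)| ≤ 1 for all z ∈ D and all positive integers k; consequently, if v_k → v pointwise, then sup_{z∈D}(1−|z|²)^β|v(z)| ≤ 1. -/

import Mathlib

open Metric Set Finset

/-! Iterating the hypothesis along the orbit `z, φ z, φ (φ z), …` telescopes: each factor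
`‖u (φ^[i] z)‖` trades the weight at `φ^[i] z` for `‖u 0‖` times the weight at `φ^[i+1] z`, so
`(1 - ‖z‖²)^β ∏_{i<k} ‖u (φ^[i] z)‖ ≤ ‖u 0‖^k (1 - ‖φ^[k] z‖²)^β ≤ ‖u 0‖^k`.
The bound for the limit `v` follows by passing to the limit pointwise. -/

theorem mul_prod_iterate_le_pow_mul {X : Type*} {s : Set X} {f : X → X} (hf : MapsTo f s s)
    {a w : X → ℝ} {c : ℝ} (ha : ∀ x, 0 ≤ a x) (hc : 0 ≤ c)
    (h : ∀ x ∈ s, a x * w x ≤ c * w (f x)) (k : ℕ) {x : X} (hx : x ∈ s) :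
    w x * ∏ i ∈ range k, a (f^[i] x) ≤ c ^ k * w (f^[k] x) := by
  induction k with
  | zero => simp
  | succ n ih =>
    calc w x * ∏ i ∈ range (n + 1), a (f^[i] x)
        = (w x * ∏ i ∈ range n, a (f^[i] x)) * a (f^[n] x) := by
          rw [prod_range_succ, mul_assoc]
      _ ≤ c ^ n * w (f^[n] x) * a (f^[n] x) := mul_le_mul_of_nonneg_right ih (ha _)
      _ = c ^ n * (a (f^[n] x) * w (f^[n] x)) := by ring
      _ ≤ c ^ n * (c * w (f (f^[n] x))) :=
          mul_le_mul_of_nonneg_left (h _ (hf.iterate n hx)) (pow_nonneg hc n)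
      _ = c ^ (n + 1) * w (f^[n + 1] x) := by rw [Function.iterate_succ_apply', pow_succ]; ring

section Weight

variable {E : Type*} [SeminormedAddCommGroup E] {z : E} {β : ℝ}

theorem one_sub_norm_sq_rpow_le_one (hz : z ∈ ball (0 : E) 1) (hβ : 0 ≤ β) :
    (1 - ‖z‖ ^ 2) ^ β ≤ 1 :=
  Real.rpow_le_one (by nlinarith [norm_nonneg z, mem_ball_zero_iff.mp hz])
    (by nlinarith [sq_nonneg ‖z‖]) hβ

theorem one_sub_norm_sq_rpow_mul_norm_prod_iterate_div_pow_le_one {𝕜 : Type*} [NormedField 𝕜]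
    {φ : E → E} (hφ : MapsTo φ (ball 0 1) (ball 0 1)) {u : E → 𝕜} {c : 𝕜} (hβ : 0 ≤ β)
    (h : ∀ z ∈ ball (0 : E) 1, ‖u z‖ * (1 - ‖z‖ ^ 2) ^ β ≤ ‖c‖ * (1 - ‖φ z‖ ^ 2) ^ β)
    (k : ℕ) (hz : z ∈ ball (0 : E) 1) :
    (1 - ‖z‖ ^ 2) ^ β * ‖(∏ i ∈ range k, u (φ^[i] z)) / c ^ k‖ ≤ 1 := by
  rw [norm_div, norm_prod, norm_pow, ← mul_div_assoc]
  have htelescope := mul_prod_iterate_le_pow_mul hφ (fun _ => norm_nonneg _) (norm_nonneg c) h k hz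
  -- `div_le_one_of_le₀` also covers `c = 0`, where the quotient is the junk value `0`.
  refine div_le_one_of_le₀ (htelescope.trans (mul_le_of_le_one_right (by positivity) ?_))
    (by positivity)
  exact one_sub_norm_sq_rpow_le_one (hφ.iterate k hz) hβ

end Weight

theorem weighted_eigenfunction_growth_general (φ u : ℂ → ℂ)
    (hφmap : Set.MapsTo φ (ball (0 : ℂ) 1) (ball (0 : ℂ) 1))
    (β : ℝ) (hβ : 0 < β)
    (hcond : ∀ z ∈ ball (0 : ℂ) 1,
      ‖u z‖ * (1 - ‖z‖ ^ 2) ^ β ≤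
        ‖u 0‖ * (1 - ‖φ z‖ ^ 2) ^ β) :
    (∀ k : ℕ, 0 < k → ∀ z ∈ ball (0 : ℂ) 1,
      (1 - ‖z‖ ^ 2) ^ β *
        ‖(∏ i ∈ Finset.range k, u (φ^[i] z)) / u 0 ^ k‖ ≤ 1) ∧
    (∀ v : ℂ → ℂ,
      (∀ z ∈ ball (0 : ℂ) 1, Filter.Tendsto
        (fun k : ℕ => (∏ i ∈ Finset.range k, u (φ^[i] z)) / u 0 ^ k)
        Filter.atTop (nhds (v z))) →
      ∀ z ∈ ball (0 : ℂ) 1, (1 - ‖z‖ ^ 2) ^ β * ‖v z‖ ≤ 1) := by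
  have hbound := fun k {z} (hz : z ∈ ball (0 : ℂ) 1) =>
    one_sub_norm_sq_rpow_mul_norm_prod_iterate_div_pow_le_one hφmap hβ.le hcond k hz
  exact ⟨fun k _ z hz => hbound k hz, fun v hv z hz =>
    le_of_tendsto' ((hv z hz).norm.const_mul _) fun k => hbound k hz⟩

/-- Growth bound for the partial products `v_k` of the principal eigenfunction of a
weighted composition operator, and for the limit function `v`. -/
theorem weighted_eigenfunction_growth (φ u : ℂ → ℂ)
    (hφmap : Set.MapsTo φ (ball (0 : ℂ) 1) (ball (0 : ℂ) 1))
    (hφ : DifferentiableOn ℂ φ (ball (0 : ℂ) 1))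
    (hφ0 : φ 0 = 0)
    (hd0 : 0 < ‖deriv φ 0‖) (hd1 : ‖deriv φ 0‖ < 1)
    (hu : DifferentiableOn ℂ u (ball (0 : ℂ) 1)) (hu0 : u 0 ≠ 0)
    (β : ℝ) (hβ : 0 < β)
    (hcond : ∀ z ∈ ball (0 : ℂ) 1,
      ‖u z‖ * (1 - ‖z‖ ^ 2) ^ β ≤
        ‖u 0‖ * (1 - ‖φ z‖ ^ 2) ^ β) :
    (∀ k : ℕ, 0 < k → ∀ z ∈ ball (0 : ℂ) 1,
      (1 - ‖z‖ ^ 2) ^ β *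
        ‖(∏ i ∈ Finset.range k, u (φ^[i] z)) / u 0 ^ k‖ ≤ 1) ∧
    (∀ v : ℂ → ℂ,
      (∀ z ∈ ball (0 : ℂ) 1, Filter.Tendsto
        (fun k : ℕ => (∏ i ∈ Finset.range k, u (φ^[i] z)) / u 0 ^ k)
        Filter.atTop (nhds (v z))) →
      ∀ z ∈ ball (0 : ℂ) 1, (1 - ‖z‖ ^ 2) ^ β * ‖v z‖ ≤ 1) :=
  weighted_eigenfunction_growth_general φ u hφmap β hβ hcond
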